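/- arXiv:1211.7329 — 2 statements merged into one kernel-verified Lean document; each statement's English description precedes it below -/
import Mathlib

section
/- For every integer N ≥ 1 and all real numbers x1, x2, x3: Σ_{1 ≤ n1,n2,n3 ≤ N} M(n1,n2,n3,N) · x1^{n1} x2^{n2} x3^{n3} = Σ_{1 ≤ p1,p2,p3 ≤ N} |CC(p1,p2,p3,N)| · (x1)_{p1} (x2)_{p2} (x3)_{p3}, where (x)_p = x(x−1)⋯(x−p+1) is the falling factorial. -/
open Finset

/-- Number of cycles of a permutation of `Fin N`, with fixed points counted as cycles. -/
def cycleCount {N : ℕ} (σ : Equiv.Perm (Fin N)) : ℕ :=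
  σ.cycleType.card + (Finset.univ.filter fun x => σ x = x).card

/-- `M n1 n2 n3 N`: the number of triples `(α1, α2, α3)` of permutations of `Fin N` having
`n1`, `n2`, `n3` cycles respectively, such that `α1 ∘ α2 ∘ α3` equals the long cycle `γ_N`. -/
noncomputable def M (n1 n2 n3 N : ℕ) : ℕ :=
  Nat.card {t : Equiv.Perm (Fin N) × Equiv.Perm (Fin N) × Equiv.Perm (Fin N) //
    t.1 * t.2.1 * t.2.2 = finRotate N ∧
    cycleCount t.1 = n1 ∧ cycleCount t.2.1 = n2 ∧ cycleCount t.2.2 = n3}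

/-- A partitioned 3-cactus: partitions `π1, π2, π3` of `{1,…,N}` into `p1, p2, p3` blocks
together with permutations `α1, α2` such that each block of `πi` is invariant under `αi`,
where `α3 = α2⁻¹ ∘ α1⁻¹ ∘ γ_N`. -/
structure CC (p1 p2 p3 N : ℕ) where
  π1 : Finpartition (Finset.univ : Finset (Fin N))
  π2 : Finpartition (Finset.univ : Finset (Fin N))
  π3 : Finpartition (Finset.univ : Finset (Fin N))
  α1 : Equiv.Perm (Fin N)
  α2 : Equiv.Perm (Fin N)
  hp1 : π1.parts.card = p1
  hp2 : π2.parts.card = p2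
  hp3 : π3.parts.card = p3
  stab1 : ∀ B ∈ π1.parts, B.image (fun x => α1 x) = B
  stab2 : ∀ B ∈ π2.parts, B.image (fun x => α2 x) = B
  stab3 : ∀ B ∈ π3.parts, B.image (fun x => (α2⁻¹ * α1⁻¹ * finRotate N) x) = B

/-- Falling factorial `(x)_p = x(x−1)⋯(x−p+1)` of a real number. -/
noncomputable def ffall (x : ℝ) (p : ℕ) : ℝ :=
  ∏ i ∈ Finset.range p, (x - i)

/-!
For a permutation `σ` of a finite set and `m : ℕ`, the colourings with `m` colours that are
constant on the cycles of `σ` number `m ^ #cycles(σ)`. Grouping them by their partition into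
colour classes, which is `σ`-invariant, and counting the injective colourings of the blocks gives
`m ^ #cycles(σ) = ∑ (m)_{#π}` over the `σ`-invariant partitions `π`. Both sides are polynomials in
`m`, so `x ^ #cycles(σ) = ∑ (x)_{#π}` for every real `x`. Applying this to `α₁`, `α₂` and
`α₃ = α₂⁻¹ α₁⁻¹ γ_N` and summing over the pairs `(α₁, α₂)` turns one side of the theorem into
the other.
-/

open Finset Equiv Equiv.Perm Function

namespace Equiv.Perm

variable {α : Type*} [Fintype α] [DecidableEq α]

def cycleOrFixedPoint (σ : Perm α) (x : α) : σ.cycleFactorsFinset ⊕ {x // σ x = x} :=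
  if h : x ∈ σ.support then .inl ⟨σ.cycleOf x, cycleOf_mem_cycleFactorsFinset_iff.2 h⟩
  else .inr ⟨x, notMem_support.1 h⟩

theorem cycleOrFixedPoint_eq_iff {σ : Perm α} {x y : α} :
    σ.cycleOrFixedPoint x = σ.cycleOrFixedPoint y ↔ SameCycle σ x y := by
  unfold cycleOrFixedPoint
  by_cases hx : x ∈ σ.support <;> by_cases hy : y ∈ σ.support
  · simp [hx, hy, sameCycle_iff_cycleOf_eq_of_mem_support hx hy]
  · simpa [hx, hy] using fun h => hy (h.mem_support_iff.1 hx)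
  · simpa [hx, hy] using fun h => hx (h.mem_support_iff.2 hy)
  · simp only [hx, hy, dite_false, Sum.inr.injEq, Subtype.mk.injEq]
    exact ⟨fun h => h ▸ SameCycle.refl σ x, fun h => h.eq_of_left (notMem_support.1 hx)⟩

theorem cycleOrFixedPoint_surjective (σ : Perm α) : Surjective σ.cycleOrFixedPoint := by
  rintro (⟨c, hc⟩ | ⟨x, hx⟩)
  · obtain ⟨a, ha⟩ := (mem_cycleFactorsFinset_iff.1 hc).1.nonempty_support
    have haσ : a ∈ σ.support := mem_cycleFactorsFinset_support_le hc ha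
    exact ⟨a, by simp [cycleOrFixedPoint, haσ, (cycle_is_cycleOf ha hc).symm]⟩
  · exact ⟨x, by simp [cycleOrFixedPoint, hx]⟩

theorem nat_card_quotient_sameCycle (σ : Perm α) :
    Nat.card (Quotient (SameCycle.setoid σ)) =
      #σ.cycleFactorsFinset + Nat.card {x // σ x = x} := by
  have hker : SameCycle.setoid σ = Setoid.ker σ.cycleOrFixedPoint :=
    Setoid.ext fun _ _ => cycleOrFixedPoint_eq_iff.symm
  rw [hker, Nat.card_congr (Setoid.quotientKerEquivOfSurjective _ σ.cycleOrFixedPoint_surjective),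
    Nat.card_sum, Nat.card_eq_fintype_card, Fintype.card_coe]

end Equiv.Perm

section InvariantFunctions

variable {α β : Type*} [Finite α]

theorem invariant_iff_sameCycle_setoid_le_ker (σ : Perm α) (f : α → β) :
    (∀ x, f (σ x) = f x) ↔ SameCycle.setoid σ ≤ Setoid.ker f := by
  refine ⟨fun hf x y hxy => ?_, fun h x => (h (sameCycle_apply_right.2 (SameCycle.refl σ x))).symm⟩
  obtain ⟨i, -, rfl⟩ := SameCycle.exists_pow_eq' hxy
  rw [Setoid.ker_def, coe_pow]
  exact (congrFun (iterate_invariant (funext hf) i) x).symm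

theorem nat_card_invariant_functions (σ : Perm α) :
    Nat.card {f : α → β // ∀ x, f (σ x) = f x} =
      Nat.card β ^ Nat.card (Quotient (SameCycle.setoid σ)) := by
  rw [Nat.card_congr ((Equiv.subtypeEquivRight (invariant_iff_sameCycle_setoid_le_ker σ)).trans
    (Setoid.liftEquiv _)), Nat.card_fun]

end InvariantFunctions

noncomputable def Function.Surjective.embeddingEquiv {α β γ : Type*} {p : α → γ}
    (hp : Surjective p) :
    (γ ↪ β) ≃ {f : α → β // ∀ a b, f a = f b ↔ p a = p b} :=
  Equiv.ofBijective (fun g => ⟨g ∘ p, fun _ _ => g.injective.eq_iff⟩) <| by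
    refine ⟨fun g g' h => DFunLike.coe_injective (hp.injective_comp_right (congrArg Subtype.val h)),
      fun f => ?_⟩
    have hf : ∀ a b, f.1 a = f.1 b ↔ p a = p b := f.2
    refine ⟨⟨f.1 ∘ surjInv hp, fun c c' h => ?_⟩, Subtype.ext (funext fun a => ?_)⟩
    · simpa only [surjInv_eq hp] using (hf _ _).1 h
    · exact (hf _ _).2 (surjInv_eq hp (p a))

namespace Finpartition

variable {α : Type*} [DecidableEq α]

theorem parts_eq_image_part {s : Finset α} (π : Finpartition s) : π.parts = s.image π.part := by
  ext B
  refine ⟨fun hB => ?_, fun hB => ?_⟩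
  · obtain ⟨a, ha, rfl⟩ := π.part_surjOn hB
    exact mem_image_of_mem _ ha
  · obtain ⟨a, ha, rfl⟩ := mem_image.1 hB
    exact π.part_mem.2 ha

theorem ext_part {s : Finset α} {π ρ : Finpartition s} (h : ∀ a, π.part a = ρ.part a) :
    π = ρ :=
  Finpartition.ext (by rw [parts_eq_image_part, parts_eq_image_part, funext h])

variable [Fintype α]

def IsInvariant (σ : Perm α) (π : Finpartition (univ : Finset α)) : Prop :=
  ∀ B ∈ π.parts, B.image σ = B

instance (σ : Perm α) : DecidablePred (IsInvariant σ) :=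
  fun π => inferInstanceAs (Decidable (∀ B ∈ π.parts, B.image σ = B))

theorem isInvariant_iff_mem_part {σ : Perm α} {π : Finpartition (univ : Finset α)} :
    π.IsInvariant σ ↔ ∀ a, σ a ∈ π.part a := by
  refine ⟨fun h a => ?_, fun h B hB => ?_⟩
  · rw [← h _ (π.part_mem.2 (mem_univ a))]
    exact mem_image_of_mem _ (π.mem_part (mem_univ a))
  · refine eq_of_subset_of_card_le (fun y hy => ?_) (card_image_of_injective B σ.injective).ge
    obtain ⟨x, hx, rfl⟩ := mem_image.1 hy
    rw [← π.part_eq_of_mem hB hx]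
    exact h x

variable {β : Type*} [DecidableEq β]

def fibers (f : α → β) : Finpartition (univ : Finset α) :=
  haveI : DecidableRel (Setoid.ker f).r := fun a b => inferInstanceAs (Decidable (f a = f b))
  ofSetoid (Setoid.ker f)

theorem mem_part_fibers {f : α → β} {a b : α} : b ∈ (fibers f).part a ↔ f a = f b :=
  mem_part_ofSetoid_iff_rel

theorem fibers_eq_iff {f : α → β} {π : Finpartition (univ : Finset α)} :
    fibers f = π ↔ ∀ a b, f a = f b ↔ π.part a = π.part b := by
  have hpart : ∀ a b, b ∈ π.part a ↔ π.part a = π.part b := fun a b =>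
    (π.mem_part_iff_part_eq_part (mem_univ b) (mem_univ a)).trans eq_comm
  refine ⟨fun h a b => ?_, fun h => ext_part fun a => ?_⟩
  · rw [← mem_part_fibers, h, hpart]
  · ext b
    rw [mem_part_fibers, hpart, h]

theorem isInvariant_fibers_iff {σ : Perm α} {f : α → β} :
    (fibers f).IsInvariant σ ↔ ∀ a, f (σ a) = f a := by
  simp only [isInvariant_iff_mem_part, mem_part_fibers, eq_comm]

theorem nat_card_fibers_eq [Fintype β] (π : Finpartition (univ : Finset α)) :
    Nat.card {f : α → β // fibers f = π} = (Nat.card β).descFactorial #π.parts := by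
  let p : α → π.parts := fun a => ⟨π.part a, π.part_mem.2 (mem_univ a)⟩
  have hp : Surjective p := by
    rintro ⟨B, hB⟩
    obtain ⟨a, -, rfl⟩ := π.part_surjOn hB
    exact ⟨a, rfl⟩
  have hker : ∀ f : α → β, fibers f = π ↔ ∀ a b, f a = f b ↔ p a = p b := fun f =>
    fibers_eq_iff.trans (by simp only [p, Subtype.ext_iff])
  rw [Nat.card_congr ((Equiv.subtypeEquivRight hker).trans hp.embeddingEquiv.symm),
    Nat.card_eq_fintype_card, Fintype.card_embedding_eq, Fintype.card_coe, Nat.card_eq_fintype_card]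

theorem sum_invariant_descFactorial_card_parts (σ : Perm α) (m : ℕ) :
    ∑ π with IsInvariant σ π, m.descFactorial #π.parts =
      m ^ Nat.card (Quotient (SameCycle.setoid σ)) := by
  have hcount : m ^ Nat.card (Quotient (SameCycle.setoid σ)) =
      #{f : α → Fin m | ∀ a, f (σ a) = f a} := by
    rw [← Fintype.card_subtype, ← Nat.card_eq_fintype_card, nat_card_invariant_functions,
      Nat.card_fin]
  rw [hcount, card_eq_sum_card_fiberwise (f := fibers) (t := {π | π.IsInvariant σ})
    fun f hf => by simpa [isInvariant_fibers_iff] using hf]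
  refine sum_congr rfl fun π hπ => ?_
  have hinv : ∀ f : α → Fin m, fibers f = π → ∀ a, f (σ a) = f a := fun f hf =>
    isInvariant_fibers_iff.1 (hf ▸ (mem_filter.1 hπ).2)
  rw [filter_filter, filter_congr fun f _ => and_iff_right_of_imp (hinv f), ← Fintype.card_subtype,
    ← Nat.card_eq_fintype_card, nat_card_fibers_eq, Nat.card_fin]

open Polynomial in
theorem sum_invariant_ffall_card_parts (σ : Perm α) (x : ℝ) :
    ∑ π with IsInvariant σ π, ffall x #π.parts = x ^ Nat.card (Quotient (SameCycle.setoid σ)) := by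
  have hpoly : ∑ π with IsInvariant σ π, descPochhammer ℝ #π.parts =
      X ^ Nat.card (Quotient (SameCycle.setoid σ)) := by
    refine eq_of_infinite_eval_eq _ _
      (Set.infinite_of_injective_forall_mem Nat.cast_injective fun m => ?_)
    simp only [Set.mem_ofPred_eq, eval_finsetSum, descPochhammer_eval_eq_descFactorial, eval_pow,
      eval_X]
    exact_mod_cast sum_invariant_descFactorial_card_parts σ m
  simpa only [ffall, ← descPochhammer_eval_eq_prod_range, eval_finsetSum, eval_pow, eval_X] using
    congrArg (Polynomial.eval x) hpoly

end Finpartition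

theorem sum_nat_card_fiber_mul {ι R : Type*} [Fintype ι] [CommSemiring R] (P : ι → Prop)
    [DecidablePred P] (g₁ g₂ g₃ : ι → ℕ) {t₁ t₂ t₃ : Finset ℕ}
    (hg : ∀ i, P i → g₁ i ∈ t₁ ∧ g₂ i ∈ t₂ ∧ g₃ i ∈ t₃) (w₁ w₂ w₃ : ℕ → R) :
    ∑ n₁ ∈ t₁, ∑ n₂ ∈ t₂, ∑ n₃ ∈ t₃,
      (Nat.card {i // P i ∧ g₁ i = n₁ ∧ g₂ i = n₂ ∧ g₃ i = n₃} : R) * w₁ n₁ * w₂ n₂ * w₃ n₃ =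
    ∑ i with P i, w₁ (g₁ i) * w₂ (g₂ i) * w₃ (g₃ i) := by
  rw [← sum_fiberwise_of_maps_to (g := fun i => (g₁ i, g₂ i, g₃ i)) (t := t₁ ×ˢ t₂ ×ˢ t₃)
    (by simpa only [mem_filter, mem_univ, true_and, mem_product] using hg), sum_product]
  refine sum_congr rfl fun n₁ _ => ?_
  rw [sum_product]
  refine sum_congr rfl fun n₂ _ => sum_congr rfl fun n₃ _ => ?_
  have hconst : ∀ i ∈ {i ∈ univ.filter P | (g₁ i, g₂ i, g₃ i) = (n₁, n₂, n₃)},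
      w₁ (g₁ i) * w₂ (g₂ i) * w₃ (g₃ i) = w₁ n₁ * w₂ n₂ * w₃ n₃ := fun i hi => by
    obtain ⟨-, hi⟩ := mem_filter.1 hi
    simp only [Prod.mk.injEq] at hi
    rw [hi.1, hi.2.1, hi.2.2]
  rw [sum_congr rfl hconst, sum_const, nsmul_eq_mul, filter_filter, Nat.card_eq_fintype_card,
    Fintype.card_subtype]
  simp only [Prod.mk.injEq, mul_assoc]

theorem sum_filter_mul_mul_eq {G M : Type*} [Group G] [Fintype G] [DecidableEq G]
    [AddCommMonoid M] (g : G) (f : G × G × G → M) :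
    ∑ t with t.1 * t.2.1 * t.2.2 = g, f t = ∑ a : G × G, f (a.1, a.2, a.2⁻¹ * a.1⁻¹ * g) := by
  have hsolve : ∀ a b c : G, a * b * c = g ↔ c = b⁻¹ * a⁻¹ * g := fun a b c => by
    rw [← mul_inv_rev, eq_inv_mul_iff_mul_eq]
  refine sum_nbij' (fun t => (t.1, t.2.1)) (fun a => (a.1, a.2, a.2⁻¹ * a.1⁻¹ * g))
    (fun _ _ => mem_univ _) (fun a _ => by simp [hsolve]) (fun t ht => ?_) (fun _ _ => rfl)
    (fun t ht => ?_)
  all_goals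
    obtain ⟨t₁, t₂, t₃⟩ := t
    have ht₃ : t₃ = t₂⁻¹ * t₁⁻¹ * g := (hsolve _ _ _).1 (mem_filter.1 ht).2
    subst ht₃
    rfl

theorem sum_filter_triple_mul {A Ψ R : Type*} [Fintype A] [Fintype Ψ] [CommSemiring R]
    (Q₁ Q₂ Q₃ : A → Ψ → Prop) [∀ a, DecidablePred (Q₁ a)] [∀ a, DecidablePred (Q₂ a)]
    [∀ a, DecidablePred (Q₃ a)] (F₁ F₂ F₃ : Ψ → R) :
    ∑ c : A × Ψ × Ψ × Ψ with Q₁ c.1 c.2.1 ∧ Q₂ c.1 c.2.2.1 ∧ Q₃ c.1 c.2.2.2,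
      F₁ c.2.1 * F₂ c.2.2.1 * F₃ c.2.2.2 =
    ∑ a, (∑ ψ with Q₁ a ψ, F₁ ψ) * (∑ ψ with Q₂ a ψ, F₂ ψ) * (∑ ψ with Q₃ a ψ, F₃ ψ) := by
  rw [sum_finset_product _ univ
    (fun a => univ.filter (Q₁ a) ×ˢ univ.filter (Q₂ a) ×ˢ univ.filter (Q₃ a)) (by simp)]
  refine sum_congr rfl fun a _ => ?_
  rw [sum_product, mul_assoc, sum_mul]
  refine sum_congr rfl fun ψ _ => ?_
  rw [sum_mul_sum, ← sum_product', mul_sum]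
  simp only [mul_assoc]

section PartitionedCacti

open Finpartition

variable {N : ℕ}

theorem cycleCount_eq_nat_card_quotient (σ : Perm (Fin N)) :
    cycleCount σ = Nat.card (Quotient (SameCycle.setoid σ)) := by
  rw [nat_card_quotient_sameCycle, cycleCount, cycleType_def, Multiset.card_map,
    Nat.card_eq_fintype_card, Fintype.card_subtype]
  rfl

theorem pow_cycleCount_eq_sum_ffall (σ : Perm (Fin N)) (x : ℝ) :
    x ^ cycleCount σ = ∑ π with IsInvariant σ π, ffall x #π.parts := by
  rw [cycleCount_eq_nat_card_quotient, sum_invariant_ffall_card_parts]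

theorem cycleCount_mem_Icc (hN : 1 ≤ N) (σ : Perm (Fin N)) : cycleCount σ ∈ Icc 1 N := by
  have : Nonempty (Quotient (SameCycle.setoid σ)) := ⟨⟦⟨0, hN⟩⟧⟩
  rw [cycleCount_eq_nat_card_quotient, mem_Icc]
  refine ⟨Nat.card_pos, ?_⟩
  simpa using Nat.card_le_card_of_surjective _ (Quotient.mk_surjective (s := SameCycle.setoid σ))

theorem card_parts_mem_Icc (hN : 1 ≤ N) (π : Finpartition (univ : Finset (Fin N))) :
    #π.parts ∈ Icc 1 N := by
  have : (univ : Finset (Fin N)).Nonempty := ⟨⟨0, hN⟩, mem_univ _⟩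
  rw [mem_Icc]
  exact ⟨card_pos.2 (π.parts_nonempty this.ne_empty), by simpa using π.card_parts_le_card⟩

-- `((α₁, α₂), (π₁, π₂, π₃))`
abbrev CactusData (N : ℕ) :=
  (Perm (Fin N) × Perm (Fin N)) × (Finpartition (univ : Finset (Fin N)) ×
    Finpartition (univ : Finset (Fin N)) × Finpartition (univ : Finset (Fin N)))

def IsPartitionedCactus (c : CactusData N) : Prop :=
  IsInvariant c.1.1 c.2.1 ∧ IsInvariant c.1.2 c.2.2.1 ∧
    IsInvariant (c.1.2⁻¹ * c.1.1⁻¹ * finRotate N) c.2.2.2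

instance : DecidablePred (IsPartitionedCactus (N := N)) :=
  fun _ => inferInstanceAs (Decidable (_ ∧ _ ∧ _))

def CC.equivCactusData (p1 p2 p3 N : ℕ) : CC p1 p2 p3 N ≃
    {c : CactusData N // IsPartitionedCactus c ∧
      #c.2.1.parts = p1 ∧ #c.2.2.1.parts = p2 ∧ #c.2.2.2.parts = p3} where
  toFun c := ⟨((c.α1, c.α2), c.π1, c.π2, c.π3), ⟨c.stab1, c.stab2, c.stab3⟩, c.hp1, c.hp2, c.hp3⟩
  invFun c := ⟨c.1.2.1, c.1.2.2.1, c.1.2.2.2, c.1.1.1, c.1.1.2, c.2.2.1, c.2.2.2.1, c.2.2.2.2,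
    c.2.1.1, c.2.1.2.1, c.2.1.2.2⟩
  left_inv _ := rfl
  right_inv _ := rfl

end PartitionedCacti

theorem stmt2 (N : ℕ) (hN : 1 ≤ N) (x1 x2 x3 : ℝ) :
    ∑ n1 ∈ Icc 1 N, ∑ n2 ∈ Icc 1 N, ∑ n3 ∈ Icc 1 N,
      (M n1 n2 n3 N : ℝ) * x1 ^ n1 * x2 ^ n2 * x3 ^ n3 =
    ∑ p1 ∈ Icc 1 N, ∑ p2 ∈ Icc 1 N, ∑ p3 ∈ Icc 1 N,
      (Nat.card (CC p1 p2 p3 N) : ℝ) * ffall x1 p1 * ffall x2 p2 * ffall x3 p3 := by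
  calc _ = ∑ t : Perm (Fin N) × Perm (Fin N) × Perm (Fin N)
          with t.1 * t.2.1 * t.2.2 = finRotate N,
        x1 ^ cycleCount t.1 * x2 ^ cycleCount t.2.1 * x3 ^ cycleCount t.2.2 :=
      sum_nat_card_fiber_mul _ _ _ _ (fun _ _ => ⟨cycleCount_mem_Icc hN _, cycleCount_mem_Icc hN _,
        cycleCount_mem_Icc hN _⟩) _ _ _
    _ = ∑ a : Perm (Fin N) × Perm (Fin N), x1 ^ cycleCount a.1 * x2 ^ cycleCount a.2 *
        x3 ^ cycleCount (a.2⁻¹ * a.1⁻¹ * finRotate N) := by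
      rw [sum_filter_mul_mul_eq]
    _ = ∑ c : CactusData N with IsPartitionedCactus c,
        ffall x1 #c.2.1.parts * ffall x2 #c.2.2.1.parts * ffall x3 #c.2.2.2.parts := by
      simp only [pow_cycleCount_eq_sum_ffall]
      exact (sum_filter_triple_mul _ _ _ _ _ _).symm
    _ = _ := by
      simp only [Nat.card_congr (CC.equivCactusData _ _ _ N)]
      exact (sum_nat_card_fiber_mul _ _ _ _ (fun _ _ => ⟨card_parts_mem_Icc hN _,
        card_parts_mem_Icc hN _, card_parts_mem_Icc hN _⟩) _ _ _).symm
end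

section
/- Let N ≥ 1, let α1, α2, α3 be permutations of {1,…,N} with α1∘α2∘α3 = γ_N, and let π1, π2, π3 be set partitions of {1,…,N} such that every block of πi is invariant under αi (i = 1,2,3). Let B1' and B1 be blocks of π1, B2 a block of π2, and B3 a block of π3 such that max(B1) ∈ B3, max(α3⁻¹(B3)) ∈ α3⁻¹(B2), and α2(α3(max(α3⁻¹(B2)))) ∈ B1'. Then either max(α3⁻¹(B2)) = N and 1 ∈ B1', or max(α3⁻¹(B2)) ≠ N and max(B1) < max(B1'). -/
open Finset

theorem stmt13 (N : ℕ) (hN : 1 ≤ N) (α1 α2 α3 : Equiv.Perm (Fin N))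
    (hprod : α1 * α2 * α3 = finRotate N)
    (π1 π2 π3 : Finpartition (Finset.univ : Finset (Fin N)))
    (hstab1 : ∀ B ∈ π1.parts, B.image (fun x => α1 x) = B)
    (hstab2 : ∀ B ∈ π2.parts, B.image (fun x => α2 x) = B)
    (hstab3 : ∀ B ∈ π3.parts, B.image (fun x => α3 x) = B)
    (B1' B1 B2 B3 : Finset (Fin N))
    (hB1' : B1' ∈ π1.parts) (hB1 : B1 ∈ π1.parts)
    (hB2 : B2 ∈ π2.parts) (hB3 : B3 ∈ π3.parts)
    -- `m1 = max B1`, `m1' = max B1'`, `g = max (α3⁻¹ B3)`, `m2' = max (α3⁻¹ B2)`: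
    (m1 m1' g m2' : Fin N)
    (hm1 : m1 ∈ B1 ∧ ∀ x ∈ B1, x ≤ m1)
    (hm1' : m1' ∈ B1' ∧ ∀ x ∈ B1', x ≤ m1')
    (hg : g ∈ B3.image (fun x => α3⁻¹ x) ∧ ∀ x ∈ B3.image (fun x => α3⁻¹ x), x ≤ g)
    (hm2' : m2' ∈ B2.image (fun x => α3⁻¹ x) ∧ ∀ x ∈ B2.image (fun x => α3⁻¹ x), x ≤ m2')
    -- the hypotheses linking the blocks:
    (h13 : m1 ∈ B3)
    (h32 : g ∈ B2.image (fun x => α3⁻¹ x))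
    (h21 : α2 (α3 m2') ∈ B1') :
    ((m2' : ℕ) = N - 1 ∧ (⟨0, hN⟩ : Fin N) ∈ B1') ∨
    ((m2' : ℕ) ≠ N - 1 ∧ m1 < m1') := by
  obtain ⟨n, rfl⟩ := Nat.exists_eq_succ_of_ne_zero (Nat.one_le_iff_ne_zero.mp hN)
  have hB3inv : B3.image (fun x => α3⁻¹ x) = B3 := by
    ext x
    simp only [Finset.mem_image]
    constructor
    · rintro ⟨y, hy, rfl⟩
      rw [← hstab3 B3 hB3] at hy
      obtain ⟨z, hz, rfl⟩ := Finset.mem_image.mp hy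
      simpa using hz
    · intro hx
      refine ⟨α3 x, ?_, by simp⟩
      rw [← hstab3 B3 hB3]
      exact Finset.mem_image_of_mem _ hx
  have hm1g : m1 ≤ g := hg.2 m1 (by rw [hB3inv]; exact h13)
  have hgm2 : g ≤ m2' := hm2'.2 g h32
  have hrot : finRotate (n + 1) m2' ∈ B1' := by
    have h2 : α1 (α2 (α3 m2')) = finRotate (n + 1) m2' := by rw [← hprod]; rfl
    rw [← h2, ← hstab1 B1' hB1']
    exact Finset.mem_image_of_mem _ h21
  by_cases hlast : (m2' : ℕ) = n + 1 - 1
  · left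
    refine ⟨hlast, ?_⟩
    have hm : m2' = Fin.last n := Fin.ext (by simpa using hlast)
    rw [hm, finRotate_succ_apply] at hrot
    have : Fin.last n + 1 = (⟨0, hN⟩ : Fin (n + 1)) := by
      apply Fin.ext
      simp [Fin.add_def, Fin.last]
    rwa [this] at hrot
  · right
    refine ⟨hlast, ?_⟩
    have hco : (finRotate (n + 1) m2' : ℕ) = (m2' : ℕ) + 1 := by
      rw [coe_finRotate]
      rw [if_neg (fun h => hlast (by rw [h]; simp))]
    have hle : finRotate (n + 1) m2' ≤ m1' := hm1'.2 _ hrot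
    have h1 : (m1 : ℕ) ≤ (m2' : ℕ) := Fin.le_iff_val_le_val.mp (le_trans hm1g hgm2)
    have h2 : (finRotate (n + 1) m2' : ℕ) ≤ (m1' : ℕ) := Fin.le_iff_val_le_val.mp hle
    exact Fin.lt_iff_val_lt_val.mpr (by omega)
end
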